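/- Fix h > 0 and let f(k) = √(k² + h²) denote the branch that is holomorphic on ℂ \ [−ih, ih] and satisfies f(k) = k(1 + o(1)) as |k| → ∞. Then f is a conformal (holomorphic bijective) mapping from ℂ \ [−ih, ih] onto ℂ \ [−h, h], and for every r > 0 one has the inclusion S_r \ [−h, h] ⊆ f(S_r \ [−ih, ih]), where S_r = {z ∈ ℂ : |Re z| < r}. -/

import Mathlib

open Complex Filter Set Bornology Topology

/-!
The two slits are matched by squaring: `k ∈ [-ih, ih]` iff `k ^ 2 + h ^ 2 ∈ [0, h ^ 2]`, and
`w ∈ [-h, h]` iff `w ^ 2 ∈ [0, h ^ 2]`. Hence `f` maps the complement of one slit into the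
complement of the other, and the preimages of `w` can only be the square roots `±k` of
`w ^ 2 - h ^ 2`. On the connected slit plane the continuous quotient `f (-k) / f k ∈ {1, -1}`
is constant, and `f k ~ k` at infinity makes it `-1`; so `f` is odd, which picks exactly one
of `±k`. Comparing real and imaginary parts of `k ^ 2 + h ^ 2 = w ^ 2` gives
`(Re k ^ 2 + Im w ^ 2) (Re k ^ 2 - Re w ^ 2) = -(h Re k) ^ 2`, so `|Re k| ≤ |Re w|`, which is
the inclusion of strips.
-/

theorem mem_ofReal_image_Icc_iff {a b : ℝ} {w : ℂ} :
    w ∈ (fun x : ℝ => (x : ℂ)) '' Icc a b ↔ w.im = 0 ∧ w.re ∈ Icc a b := by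
  constructor
  · rintro ⟨x, hx, rfl⟩
    exact ⟨ofReal_im x, hx⟩
  · rintro ⟨him, hre⟩
    exact ⟨w.re, hre, Complex.ext rfl him.symm⟩

theorem mem_segment_neg_mul_I_iff {h : ℝ} (hh : 0 ≤ h) {z : ℂ} :
    z ∈ segment ℝ (-(h : ℂ) * I) ((h : ℂ) * I) ↔ z.re = 0 ∧ z.im ∈ Icc (-h) h := by
  have hseg :
      segment ℝ (-(h : ℂ) * I) ((h : ℂ) * I) = (fun t : ℝ => (t : ℂ) * I) '' Icc (-h) h := by
    have := image_segment ℝ (LinearMap.toSpanSingleton ℝ ℂ I).toAffineMap (-h) h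
    rw [segment_eq_Icc (by linarith)] at this
    simpa [Complex.real_smul] using this.symm
  rw [hseg]
  constructor
  · rintro ⟨t, ht, rfl⟩
    simpa using ht
  · rintro ⟨hre, him⟩
    exact ⟨z.im, him, Complex.ext (by simp [hre]) (by simp)⟩

theorem sq_mem_ofReal_image_Icc_iff {h : ℝ} (hh : 0 ≤ h) {w : ℂ} :
    w ^ 2 ∈ (fun x : ℝ => (x : ℂ)) '' Icc 0 (h ^ 2) ↔
      w ∈ (fun x : ℝ => (x : ℂ)) '' Icc (-h) h := by
  simp only [mem_ofReal_image_Icc_iff, sq, mul_re, mul_im, mem_Icc]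
  constructor
  · rintro ⟨him, hre0, hreh⟩
    have hw : w.im = 0 := by
      rcases mul_eq_zero.1 (by linarith : w.re * w.im = 0) with h0 | h0
      · nlinarith
      · exact h0
    exact ⟨hw, abs_le_of_sq_le_sq' (by nlinarith) hh⟩
  · rintro ⟨him, hre⟩
    rw [him]
    exact ⟨by ring, by nlinarith, by nlinarith⟩

theorem sq_add_sq_mem_ofReal_image_Icc_iff {h : ℝ} (hh : 0 ≤ h) {z : ℂ} :
    z ^ 2 + (h : ℂ) ^ 2 ∈ (fun x : ℝ => (x : ℂ)) '' Icc 0 (h ^ 2) ↔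
      z ∈ segment ℝ (-(h : ℂ) * I) ((h : ℂ) * I) := by
  simp only [mem_ofReal_image_Icc_iff, mem_segment_neg_mul_I_iff hh, sq, add_re, add_im, mul_re,
    mul_im, ofReal_re, ofReal_im, mem_Icc]
  constructor
  · rintro ⟨him, hre0, hreh⟩
    have hz : z.re = 0 := by
      rcases mul_eq_zero.1 (by linarith : z.re * z.im = 0) with h0 | h0
      · exact h0
      · nlinarith
    exact ⟨hz, abs_le_of_sq_le_sq' (by nlinarith) hh⟩
  · rintro ⟨hre, him⟩
    rw [hre]
    exact ⟨by ring, by nlinarith, by nlinarith⟩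

theorem mem_segment_neg_mul_I_iff_of_sq_eq {h : ℝ} (hh : 0 ≤ h) {z w : ℂ}
    (hwz : w ^ 2 = z ^ 2 + (h : ℂ) ^ 2) :
    z ∈ segment ℝ (-(h : ℂ) * I) ((h : ℂ) * I) ↔ w ∈ (fun x : ℝ => (x : ℂ)) '' Icc (-h) h := by
  rw [← sq_add_sq_mem_ofReal_image_Icc_iff hh, ← hwz, sq_mem_ofReal_image_Icc_iff hh]

theorem neg_mem_compl_segment_neg_mul_I {h : ℝ} (hh : 0 ≤ h) {k : ℂ}
    (hk : k ∈ (segment ℝ (-(h : ℂ) * I) ((h : ℂ) * I))ᶜ) :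
    -k ∈ (segment ℝ (-(h : ℂ) * I) ((h : ℂ) * I))ᶜ := by
  simp only [mem_compl_iff, mem_segment_neg_mul_I_iff hh, mem_Icc, neg_re, neg_im] at hk ⊢
  grind

theorem isPreconnected_compl_segment_neg_mul_I {h : ℝ} (hh : 0 ≤ h) :
    IsPreconnected (segment ℝ (-(h : ℂ) * I) ((h : ℂ) * I))ᶜ := by
  have hright := (convex_halfSpace_re_gt (0 : ℝ)).isPreconnected
  have hleft := (convex_halfSpace_re_lt (0 : ℝ)).isPreconnected
  have hup := (convex_halfSpace_im_gt h).isPreconnected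
  have hdown := (convex_halfSpace_im_lt (-h)).isPreconnected
  have h1 := hright.union (⟨1, h + 1⟩ : ℂ) (by simp) (by simp) hup
  have h2 := h1.union (⟨-1, h + 1⟩ : ℂ) (by simp) (by simp) hleft
  have h3 := h2.union (⟨1, -h - 1⟩ : ℂ) (by simp) (by simp) hdown
  convert h3 using 1
  ext z
  simp only [mem_compl_iff, mem_segment_neg_mul_I_iff hh, mem_Icc, mem_union, mem_ofPred_eq]
  grind

theorem abs_re_le_abs_re_of_sq_add_sq_eq {k w : ℂ} {h : ℝ}
    (hkw : k ^ 2 + (h : ℂ) ^ 2 = w ^ 2) : |k.re| ≤ |w.re| := by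
  have hre : k.re * k.re - k.im * k.im + h * h = w.re * w.re - w.im * w.im := by
    simpa [sq] using congrArg re hkw
  have him : k.re * k.im = w.re * w.im := by
    have := congrArg im hkw
    simp only [sq, add_im, mul_im, ← ofReal_mul, ofReal_im, add_zero] at this
    linarith
  have key : (k.re ^ 2 + w.im ^ 2) * (k.re ^ 2 - w.re ^ 2) = -(k.re * h) ^ 2 := by
    linear_combination k.re ^ 2 * hre + (k.re * k.im + w.re * w.im) * him
  rw [← sq_le_sq]
  nlinarith [sq_nonneg w.im, sq_nonneg k.re, sq_nonneg (k.re * h)]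

theorem apply_neg_eq_neg_of_sq_eq_of_tendsto_div_self {U : Set ℂ} (hU : IsPreconnected U)
    (hUc : U ∈ cobounded ℂ) (hneg : ∀ k ∈ U, -k ∈ U) {f : ℂ → ℂ}
    (hf : ContinuousOn f U) (hf0 : ∀ k ∈ U, f k ≠ 0) (hsq : ∀ k ∈ U, f (-k) ^ 2 = f k ^ 2)
    (hasymp : Tendsto (fun k => f k / k) (cobounded ℂ) (𝓝 1)) :
    ∀ k ∈ U, f (-k) = -f k := by
  set g : ℂ → ℂ := fun k => f (-k) / f k
  have hg : ContinuousOn g U := (hf.comp continuous_neg.continuousOn hneg).div hf hf0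
  have hgU : MapsTo g U {1, -1} := fun k hk => by
    have : g k ^ 2 = 1 := by rw [div_pow, hsq k hk, div_self (pow_ne_zero 2 (hf0 k hk))]
    exact sq_eq_one_iff.1 this
  obtain ⟨c, -, hgc⟩ := hU.eqOn_const_of_mapsTo (toFinite _).isDiscrete hg hgU ⟨1, by simp⟩
  have hg_lim : Tendsto g (cobounded ℂ) (𝓝 (-1)) := by
    have := ((hasymp.comp tendsto_neg_cobounded).div hasymp one_ne_zero).neg
    rw [div_one] at this
    refine this.congr' ((eventually_ne_cobounded 0).mono fun k hk => ?_)
    simp only [Function.comp_apply, Pi.div_apply, g]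
    rw [div_neg, neg_div, neg_neg, div_div_div_cancel_right₀ hk]
  have hc : c = -1 := tendsto_nhds_unique
    (tendsto_const_nhds.congr' (eventually_of_mem hUc fun _ hk => (hgc hk).symm)) hg_lim
  intro k hk
  have := hgc hk
  rwa [hc, Function.const_apply, div_eq_iff (hf0 k hk), neg_one_mul] at this

theorem injOn_of_sq_eq_sq_add_of_odd {U : Set ℂ} {f : ℂ → ℂ} {c : ℂ}
    (hf0 : ∀ k ∈ U, f k ≠ 0) (hodd : ∀ k ∈ U, f (-k) = -f k)
    (hsq : ∀ k ∈ U, f k ^ 2 = k ^ 2 + c) : InjOn f U := by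
  intro k₁ hk₁ k₂ hk₂ heq
  have hfactor : (k₁ - k₂) * (k₁ + k₂) = 0 := by
    linear_combination (hsq k₂ hk₂) - (hsq k₁ hk₁) + (f k₁ + f k₂) * heq
  rcases mul_eq_zero.1 hfactor with h | h
  · exact sub_eq_zero.1 h
  · have : f k₂ = -f k₂ := by rw [← hodd k₂ hk₂, ← eq_neg_of_add_eq_zero_left h, heq]
    exact absurd (CharZero.eq_neg_self_iff.1 this) (hf0 k₂ hk₂)

section SlitComplement

variable {h : ℝ} (hh : 0 ≤ h) {f : ℂ → ℂ}
  (hsq : ∀ k ∈ (segment ℝ (-(h : ℂ) * I) ((h : ℂ) * I))ᶜ, f k ^ 2 = k ^ 2 + (h : ℂ) ^ 2)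
include hh hsq

theorem mapsTo_compl_segment_neg_mul_I :
    MapsTo f (segment ℝ (-(h : ℂ) * I) ((h : ℂ) * I))ᶜ
      ((fun x : ℝ => (x : ℂ)) '' Icc (-h) h)ᶜ :=
  fun k hk => (mem_segment_neg_mul_I_iff_of_sq_eq hh (hsq k hk)).not.1 hk

theorem ne_zero_of_mem_compl_segment_neg_mul_I {k : ℂ}
    (hk : k ∈ (segment ℝ (-(h : ℂ) * I) ((h : ℂ) * I))ᶜ) : f k ≠ 0 := fun h0 =>
  mapsTo_compl_segment_neg_mul_I hh hsq hk (h0 ▸ ⟨0, by simp [hh], ofReal_zero⟩)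

theorem apply_neg_eq_neg_of_mem_compl_segment_neg_mul_I
    (hf : ContinuousOn f (segment ℝ (-(h : ℂ) * I) ((h : ℂ) * I))ᶜ)
    (hasymp : Tendsto (fun k => f k / k) (cobounded ℂ) (𝓝 1)) :
    ∀ k ∈ (segment ℝ (-(h : ℂ) * I) ((h : ℂ) * I))ᶜ, f (-k) = -f k := by
  refine apply_neg_eq_neg_of_sq_eq_of_tendsto_div_self (isPreconnected_compl_segment_neg_mul_I hh)
    (isBounded_def.1 (Metric.isBounded_closedBall.subset (segment_subset_closedBall_left _ _)))
    (fun _ => neg_mem_compl_segment_neg_mul_I hh) hf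
    (fun _ => ne_zero_of_mem_compl_segment_neg_mul_I hh hsq) (fun k hk => ?_) hasymp
  rw [hsq k hk, hsq (-k) (neg_mem_compl_segment_neg_mul_I hh hk), neg_sq]

theorem exists_mem_compl_segment_neg_mul_I_eq_and_abs_re_le
    (hodd : ∀ k ∈ (segment ℝ (-(h : ℂ) * I) ((h : ℂ) * I))ᶜ, f (-k) = -f k) {w : ℂ}
    (hw : w ∉ (fun x : ℝ => (x : ℂ)) '' Icc (-h) h) :
    ∃ k ∈ (segment ℝ (-(h : ℂ) * I) ((h : ℂ) * I))ᶜ, f k = w ∧ |k.re| ≤ |w.re| := by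
  obtain ⟨k, hk⟩ := IsAlgClosed.exists_pow_nat_eq (w ^ 2 - (h : ℂ) ^ 2) two_pos
  have hkw : w ^ 2 = k ^ 2 + (h : ℂ) ^ 2 := by rw [hk, sub_add_cancel]
  have hkS : k ∉ segment ℝ (-(h : ℂ) * I) ((h : ℂ) * I) :=
    (mem_segment_neg_mul_I_iff_of_sq_eq hh hkw).not.2 hw
  have hre := abs_re_le_abs_re_of_sq_add_sq_eq hkw.symm
  have hsign : (f k - w) * (f k + w) = 0 := by linear_combination hsq k hkS - hkw
  rcases mul_eq_zero.1 hsign with hfk | hfk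
  · exact ⟨k, hkS, sub_eq_zero.1 hfk, hre⟩
  · refine ⟨-k, neg_mem_compl_segment_neg_mul_I hh hkS, ?_, by rwa [neg_re, abs_neg]⟩
    rw [hodd k hkS]
    linear_combination -hfk

end SlitComplement

/-- Fix `h > 0` and let `f` be the branch of `√(k² + h²)` holomorphic
on `ℂ \ [−ih, ih]` with `f(k) = k(1 + o(1))` as `|k| → ∞`. Then `f` is a conformal
(holomorphic bijective) map from `ℂ \ [−ih, ih]` onto `ℂ \ [−h, h]`, and for every
`r > 0` one has `S_r \ [−h, h] ⊆ f(S_r \ [−ih, ih])`, where `S_r = {z : |Re z| < r}`. -/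
theorem sqrt_sq_add_sq_conformal_strip (h : ℝ) (hh : 0 < h) (f : ℂ → ℂ)
    (hholo : DifferentiableOn ℂ f (segment ℝ (-(h : ℂ) * Complex.I) ((h : ℂ) * Complex.I))ᶜ)
    (hsq : ∀ k ∈ (segment ℝ (-(h : ℂ) * Complex.I) ((h : ℂ) * Complex.I))ᶜ,
      f k ^ 2 = k ^ 2 + (h : ℂ) ^ 2)
    (hasymp : Filter.Tendsto (fun k : ℂ => f k / k) (Bornology.cobounded ℂ) (nhds 1)) :
    Set.BijOn f (segment ℝ (-(h : ℂ) * Complex.I) ((h : ℂ) * Complex.I))ᶜ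
      ((fun x : ℝ => (x : ℂ)) '' Set.Icc (-h) h)ᶜ ∧
    ∀ r > 0, {z : ℂ | |z.re| < r} \ (fun x : ℝ => (x : ℂ)) '' Set.Icc (-h) h ⊆
      f '' ({z : ℂ | |z.re| < r} \ segment ℝ (-(h : ℂ) * Complex.I) ((h : ℂ) * Complex.I)) := by
  have hodd := apply_neg_eq_neg_of_mem_compl_segment_neg_mul_I hh.le hsq hholo.continuousOn hasymp
  refine ⟨⟨mapsTo_compl_segment_neg_mul_I hh.le hsq,
    injOn_of_sq_eq_sq_add_of_odd (fun _ => ne_zero_of_mem_compl_segment_neg_mul_I hh.le hsq)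
      hodd hsq, fun w hw => ?_⟩, fun r _ w hw => ?_⟩
  · obtain ⟨k, hkS, hkw, -⟩ := exists_mem_compl_segment_neg_mul_I_eq_and_abs_re_le hh.le hsq hodd hw
    exact ⟨k, hkS, hkw⟩
  · obtain ⟨k, hkS, hkw, hre⟩ :=
      exists_mem_compl_segment_neg_mul_I_eq_and_abs_re_le hh.le hsq hodd hw.2
    exact ⟨k, ⟨hre.trans_lt hw.1, hkS⟩, hkw⟩
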